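/- arXiv:0909.0950 — 5 statements merged into one kernel-verified Lean document; each statement's English description precedes it below -/
import Mathlib

section
/- Let 0 ≤ t ≤ s ≤ r ≤ 1 be real numbers. Then r·(r + t − r·t − s² − 2·s·√((1−r)(1−t))) − r² + t² ≤ 0. -/
/-- For `0 ≤ t ≤ s ≤ r ≤ 1`,
`r·(r + t − r·t − s² − 2·s·√((1−r)(1−t))) − r² + t² ≤ 0`. -/
theorem dist_projection_core_ineq (r s t : ℝ)
    (ht : 0 ≤ t) (hts : t ≤ s) (hsr : s ≤ r) (hr : r ≤ 1) :
    r * (r + t - r * t - s ^ 2 - 2 * s * Real.sqrt ((1 - r) * (1 - t)))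
      - r ^ 2 + t ^ 2 ≤ 0 := by
  set A := Real.sqrt ((1 - r) * (1 - t)) with hAdef
  have hr0 : (0:ℝ) ≤ r := ht.trans (hts.trans hsr)
  have hA0 : 0 ≤ A := Real.sqrt_nonneg _
  have hA : 1 - r ≤ A := by
    rw [hAdef]
    calc 1 - r = Real.sqrt ((1 - r) ^ 2) := by
          rw [Real.sqrt_sq (by linarith)]
      _ ≤ Real.sqrt ((1 - r) * (1 - t)) := by
          apply Real.sqrt_le_sqrt; nlinarith
  have h1 : 0 ≤ r * (s - t) * (s + t) :=
    mul_nonneg (mul_nonneg hr0 (by linarith)) (by linarith)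
  have h2 : 0 ≤ 2 * (r * (s - t)) * A :=
    mul_nonneg (by nlinarith) hA0
  have h3 : 0 ≤ 2 * (r * t) * (A - (1 - r)) :=
    mul_nonneg (by positivity) (by linarith)
  have h4 : 0 ≤ t * (1 - r) * (r - t) :=
    mul_nonneg (mul_nonneg ht (by linarith)) (by linarith)
  nlinarith [h1, h2, h3, h4]
end

section
/- Chain rule I for min-entropy: for any subnormalized positive semidefinite operator ρ on H_A ⊗ H_B ⊗ H_C and any normalized state σ_C on H_C, if ρ_ABC ≤ 2^{-a} · 1_A ⊗ ρ_BC and ρ_BC ≤ 2^{-b} · 1_B ⊗ σ_C, then ρ_ABC ≤ 2^{-(a+b)} · 1_{AB} ⊗ σ_C. In entropy notation: H_min(A|BC)_{ρ|ρ} ≤ H_min(AB|C)_{ρ|σ} − H_min(B|C)_{ρ|σ}. -/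
open Matrix
open scoped Kronecker ComplexOrder Classical

noncomputable section

variable {α β γ : Type*} [Fintype α] [DecidableEq α] [Fintype β] [DecidableEq β]
  [Fintype γ] [DecidableEq γ]

/-- partial trace over the first tensor factor. -/
def ptrFst (ρ : Matrix (α × β) (α × β) ℂ) : Matrix β β ℂ :=
  fun p q => ∑ i, ρ (i, p) (i, q)

open scoped MatrixOrder

namespace Matrix

variable {𝕜 m n : Type*} [RCLike 𝕜] [Fintype m] [DecidableEq m] [Fintype n]

theorem one_kronecker_le_one_kronecker {A B : Matrix n n 𝕜} (h : A ≤ B) :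
    (1 : Matrix m m 𝕜) ⊗ₖ A ≤ 1 ⊗ₖ B := by
  rw [le_iff, sub_eq_iff_eq_add.mpr (by rw [← kronecker_add, sub_add_cancel])]
  exact PosSemidef.one.kronecker h

theorem le_smul_one_kronecker_of_le {ρ : Matrix (m × n) (m × n) 𝕜} {τ ω : Matrix n n 𝕜}
    {c d : 𝕜} (hc : 0 ≤ c) (hρ : ρ ≤ c • (1 ⊗ₖ τ)) (hτ : τ ≤ d • ω) :
    ρ ≤ (c * d) • (1 ⊗ₖ ω) :=
  calc ρ ≤ c • (1 ⊗ₖ τ) := hρ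
    _ ≤ c • (1 ⊗ₖ (d • ω)) :=
      smul_le_smul_of_nonneg_left (one_kronecker_le_one_kronecker hτ) hc
    _ = (c * d) • (1 ⊗ₖ ω) := by rw [kronecker_smul, smul_smul]

end Matrix

theorem Hmin_chain_rule_I_general
    (ρ : Matrix (α × β × γ) (α × β × γ) ℂ)
    (σC : Matrix γ γ ℂ)
    (a b : ℝ)
    (ha : ((((2 : ℝ) ^ (-a) : ℝ) : ℂ) • ((1 : Matrix α α ℂ) ⊗ₖ ptrFst ρ)
            - ρ).PosSemidef)
    (hb : ((((2 : ℝ) ^ (-b) : ℝ) : ℂ) • ((1 : Matrix β β ℂ) ⊗ₖ σC)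
            - ptrFst ρ).PosSemidef) :
    ((((2 : ℝ) ^ (-(a + b)) : ℝ) : ℂ) •
        ((1 : Matrix α α ℂ) ⊗ₖ ((1 : Matrix β β ℂ) ⊗ₖ σC))
      - ρ).PosSemidef := by
  rw [neg_add, Real.rpow_add two_pos, Complex.ofReal_mul]
  exact le_smul_one_kronecker_of_le (by exact_mod_cast Real.rpow_nonneg zero_le_two _) ha hb

/-- Chain rule I for the min-entropy: for a subnormalized `ρ_ABC` and a
normalized `σ_C`, if `ρ_ABC ≤ 2^{-a} 1_A ⊗ ρ_BC` and `ρ_BC ≤ 2^{-b} 1_B ⊗ σ_C`,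
then `ρ_ABC ≤ 2^{-(a+b)} 1_{AB} ⊗ σ_C`; i.e.
`H_min(A|BC)_{ρ|ρ} ≤ H_min(AB|C)_{ρ|σ} − H_min(B|C)_{ρ|σ}`. -/
theorem Hmin_chain_rule_I
    (ρ : Matrix (α × β × γ) (α × β × γ) ℂ) (hρ : ρ.PosSemidef)
    (hρtr : ρ.trace.re ≤ 1)
    (σC : Matrix γ γ ℂ) (hσ : σC.PosSemidef) (hσtr : σC.trace = 1)
    (a b : ℝ)
    (ha : ((((2 : ℝ) ^ (-a) : ℝ) : ℂ) • ((1 : Matrix α α ℂ) ⊗ₖ ptrFst ρ)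
            - ρ).PosSemidef)
    (hb : ((((2 : ℝ) ^ (-b) : ℝ) : ℂ) • ((1 : Matrix β β ℂ) ⊗ₖ σC)
            - ptrFst ρ).PosSemidef) :
    ((((2 : ℝ) ^ (-(a + b)) : ℝ) : ℂ) •
        ((1 : Matrix α α ℂ) ⊗ₖ ((1 : Matrix β β ℂ) ⊗ₖ σC))
      - ρ).PosSemidef :=
  Hmin_chain_rule_I_general ρ σC a b ha hb
end
end

section
/- Chain rule II: for any subnormalized positive semidefinite operator ρ_AB on H_A ⊗ H_B, H_min(AB)_ρ − H_{−∞}(B)_ρ ≤ H_min(A|B)_{ρ|ρ}; concretely, if ρ_AB ≤ μ · 1_{AB} (so μ ≥ ‖ρ_AB‖∞) and ρ_B ≥ ν · Π_{supp(ρ_B)} with ν > 0 the smallest nonzero eigenvalue of ρ_B, then ρ_AB ≤ (μ/ν) · 1_A ⊗ ρ_B. -/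
/-! Write `Q = 1_A ⊗ P`. The support of `ρ_AB` lies in the range of `Q`: compressing `ρ_AB` by
`1_A ⊗ (1 - P)` gives a positive matrix whose partial trace `(1 - P) ρ_B (1 - P)` vanishes, so it
vanishes itself. Hence `Q (μ·1 - ρ_AB) Q = μ Q - ρ_AB ≥ 0`, and
`(μ/ν)(1_A ⊗ ρ_B) - ρ_AB = (μ/ν)(1_A ⊗ (ρ_B - ν P)) + (μ Q - ρ_AB)` is a sum of positive matrices. -/

open Matrix
open scoped Kronecker ComplexOrder Classical

noncomputable section

variable {α β : Type*} [Fintype α] [DecidableEq α] [Fintype β] [DecidableEq β]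

namespace Matrix

theorem kronecker_sub {l m n p R : Type*} [NonUnitalNonAssocRing R] (A : Matrix l m R)
    (B₁ B₂ : Matrix n p R) : A ⊗ₖ (B₁ - B₂) = A ⊗ₖ B₁ - A ⊗ₖ B₂ := by
  ext; simp [mul_sub]

theorem mul_one_sub_eq_zero_of_ker_le {n R : Type*} [Fintype n] [DecidableEq n] [Ring R]
    {A P : Matrix n n R} (hP : P * P = P) (hker : ∀ v, P *ᵥ v = 0 → A *ᵥ v = 0) :
    A * (1 - P) = 0 := by
  refine ext_iff_mulVec.mpr fun v => ?_
  rw [← mulVec_mulVec, zero_mulVec]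
  exact hker _ (by rw [mulVec_mulVec, mul_sub, mul_one, hP, sub_self, zero_mulVec])

end Matrix

namespace Matrix.PosSemidef

variable {ι 𝕜 : Type*} [RCLike 𝕜]

theorem mul_eq_zero_of_conjTranspose_mul_mul_eq_zero [Fintype ι] {κ : Type*} {A : Matrix ι ι 𝕜}
    (hA : A.PosSemidef) {B : Matrix ι κ 𝕜} (h : Bᴴ * A * B = 0) : A * B = 0 := by
  open scoped MatrixOrder in
  obtain ⟨C, rfl⟩ := CStarAlgebra.nonneg_iff_eq_star_mul_self.mp hA.nonneg
  have hCB : C * B = 0 := by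
    rw [← conjTranspose_mul_self_eq_zero, conjTranspose_mul, ← h, star_eq_conjTranspose]
    simp only [Matrix.mul_assoc]
  rw [Matrix.mul_assoc, hCB, Matrix.mul_zero]

theorem nonneg_of_smul_one_sub [DecidableEq ι] [Nonempty ι] {A : Matrix ι ι 𝕜}
    (hA : A.PosSemidef) {c : ℝ} (hc : ((c : 𝕜) • 1 - A).PosSemidef) : 0 ≤ c := by
  obtain ⟨i⟩ := ‹Nonempty ι›
  have := (hc.add hA).diag_nonneg (i := i)
  rwa [sub_add_cancel, smul_apply, one_apply_eq, smul_eq_mul, mul_one, RCLike.ofReal_nonneg] at this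

theorem smul_sub_of_smul_one_sub [Fintype ι] [DecidableEq ι] {A Q : Matrix ι ι 𝕜} {c : 𝕜}
    (hc : (c • 1 - A).PosSemidef) (hA : A.IsHermitian) (hQ : Q.IsHermitian) (hQQ : Q * Q = Q)
    (hAQ : A * Q = A) : (c • Q - A).PosSemidef := by
  have hQA : Q * A = A := by
    rw [← hQ.eq, ← hA.eq, ← conjTranspose_mul, hAQ]
  have := hc.conjTranspose_mul_mul_same Q
  rwa [hQ.eq, Matrix.mul_sub, Matrix.sub_mul, hQA, hAQ, Matrix.mul_smul, Matrix.mul_one,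
    Matrix.smul_mul, hQQ] at this

end Matrix.PosSemidef

section PartialTrace

variable {m n : Type*} [Fintype m] [Fintype n]

theorem trace_ptrFst (ρ : Matrix (m × n) (m × n) ℂ) : (ptrFst ρ).trace = ρ.trace := by
  simp only [trace, ptrFst, diag_apply, Fintype.sum_prod_type]
  exact Finset.sum_comm

variable [DecidableEq m]

theorem ptrFst_one_kronecker_mul_mul (X Y : Matrix n n ℂ) (ρ : Matrix (m × n) (m × n) ℂ) :
    ptrFst ((1 ⊗ₖ X) * ρ * (1 ⊗ₖ Y)) = X * ptrFst ρ * Y := by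
  ext p q
  simp only [ptrFst, mul_apply, kroneckerMap_apply, one_apply, ite_mul, one_mul, zero_mul,
    Fintype.sum_prod_type, Finset.sum_ite_irrel, Finset.sum_const_zero, Finset.sum_ite_eq,
    Finset.mem_univ, ↓reduceIte, mul_ite, Finset.sum_mul, mul_zero, Finset.sum_ite_eq',
    Finset.mul_sum]
  exact Finset.sum_comm.trans (Finset.sum_congr rfl fun _ _ => Finset.sum_comm)

theorem Matrix.PosSemidef.mul_one_kronecker_eq_zero {ρ : Matrix (m × n) (m × n) ℂ}
    (hρ : ρ.PosSemidef) {R : Matrix n n ℂ} (hR : ptrFst ρ * R = 0) : ρ * (1 ⊗ₖ R) = 0 := by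
  refine hρ.mul_eq_zero_of_conjTranspose_mul_mul_eq_zero
    ((hρ.conjTranspose_mul_mul_same (1 ⊗ₖ R)).trace_eq_zero_iff.mp ?_)
  rw [← trace_ptrFst, conjTranspose_kronecker, conjTranspose_one, ptrFst_one_kronecker_mul_mul,
    Matrix.mul_assoc, hR, Matrix.mul_zero, trace_zero]

variable [DecidableEq n]

theorem Matrix.PosSemidef.mul_one_kronecker_eq_self {ρ : Matrix (m × n) (m × n) ℂ}
    (hρ : ρ.PosSemidef) {P : Matrix n n ℂ} (hP : P * P = P)
    (hker : ∀ v, P *ᵥ v = 0 → ptrFst ρ *ᵥ v = 0) : ρ * (1 ⊗ₖ P) = ρ := by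
  have := hρ.mul_one_kronecker_eq_zero (mul_one_sub_eq_zero_of_ker_le hP hker)
  rwa [kronecker_sub, one_kronecker_one, Matrix.mul_sub, Matrix.mul_one, sub_eq_zero,
    eq_comm] at this

end PartialTrace

theorem Hmin_chain_rule_II_general
    (ρ : Matrix (α × β) (α × β) ℂ) (hρ : ρ.PosSemidef)
    (μ ν : ℝ) (hν : 0 < ν)
    (hμ : (((μ : ℂ) • (1 : Matrix (α × β) (α × β) ℂ)) - ρ).PosSemidef)
    (P : Matrix β β ℂ) (hPH : P.IsHermitian) (hPproj : P * P = P)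
    (hPsupp : ∀ v : β → ℂ, (ptrFst ρ) *ᵥ v = 0 ↔ P *ᵥ v = 0)
    (hlow : (ptrFst ρ - ((ν : ℂ) • P)).PosSemidef) :
    ((((μ / ν : ℝ) : ℂ) • ((1 : Matrix α α ℂ) ⊗ₖ ptrFst ρ)) - ρ).PosSemidef := by
  rcases isEmpty_or_nonempty (α × β) with _ | _
  · convert PosSemidef.zero (R := ℂ) (n := α × β)
    exact Subsingleton.elim _ _
  have hQ : ((1 : Matrix α α ℂ) ⊗ₖ P).IsHermitian := by
    rw [IsHermitian, conjTranspose_kronecker, conjTranspose_one, hPH.eq]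
  have hQQ : ((1 : Matrix α α ℂ) ⊗ₖ P) * (1 ⊗ₖ P) = 1 ⊗ₖ P := by
    rw [← mul_kronecker_mul, one_mul, hPproj]
  have hρQ := hρ.mul_one_kronecker_eq_self hPproj fun v => (hPsupp v).mpr
  have hcompressed := hμ.smul_sub_of_smul_one_sub hρ.isHermitian hQ hQQ hρQ
  have hdecomp : (((μ / ν : ℝ) : ℂ) • ((1 : Matrix α α ℂ) ⊗ₖ ptrFst ρ)) - ρ =
      ((μ / ν : ℝ) : ℂ) • ((1 : Matrix α α ℂ) ⊗ₖ (ptrFst ρ - (ν : ℂ) • P)) +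
        ((μ : ℂ) • (1 ⊗ₖ P) - ρ) := by
    rw [kronecker_sub, kronecker_smul, smul_sub, smul_smul, ← Complex.ofReal_mul,
      div_mul_cancel₀ _ hν.ne']
    abel
  have hμν : (0 : ℂ) ≤ ((μ / ν : ℝ) : ℂ) :=
    Complex.zero_le_real.mpr (div_nonneg (hρ.nonneg_of_smul_one_sub hμ) hν.le)
  rw [hdecomp]
  exact ((PosSemidef.one.kronecker hlow).smul hμν).add hcompressed

/-- Chain rule II: for a subnormalized `ρ_AB`, if `ρ_AB ≤ μ·1_{AB}` and
`ρ_B ≥ ν·Π_{supp(ρ_B)}` with `ν > 0` (where `P` is the orthogonal projector onto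
the support of `ρ_B`), then `ρ_AB ≤ (μ/ν)·(1_A ⊗ ρ_B)`; in entropy form,
`H_min(AB)_ρ − H_{−∞}(B)_ρ ≤ H_min(A|B)_{ρ|ρ}`. -/
theorem Hmin_chain_rule_II
    (ρ : Matrix (α × β) (α × β) ℂ) (hρ : ρ.PosSemidef) (hρtr : ρ.trace.re ≤ 1)
    (μ ν : ℝ) (hν : 0 < ν)
    (hμ : (((μ : ℂ) • (1 : Matrix (α × β) (α × β) ℂ)) - ρ).PosSemidef)
    (P : Matrix β β ℂ) (hPH : P.IsHermitian) (hPproj : P * P = P)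
    (hPsupp : ∀ v : β → ℂ, (ptrFst ρ) *ᵥ v = 0 ↔ P *ᵥ v = 0)
    (hlow : (ptrFst ρ - ((ν : ℂ) • P)).PosSemidef) :
    ((((μ / ν : ℝ) : ℂ) • ((1 : Matrix α α ℂ) ⊗ₖ ptrFst ρ)) - ρ).PosSemidef :=
  Hmin_chain_rule_II_general ρ hρ μ ν hν hμ P hPH hPproj hPsupp hlow
end
end

section
/- Eigenvalue-tail bound relating H_max and H_{−∞}: let σ be a positive semidefinite n×n matrix with tr σ ≤ 1 and spectral decomposition σ = Σ_i r_i |i⟩⟨i| with r_1 ≥ r_2 ≥ … ≥ r_n. Fix ε > 0, let j be the smallest index with Σ_{i ≥ j} r_i ≤ ε, and set Π := Σ_{i < j} |i⟩⟨i|. Then tr((1 − Π)σ) ≤ ε and tr√σ > ε · (λ_min⁺(ΠσΠ))^{−1/2}, where λ_min⁺ denotes the smallest nonzero eigenvalue (assuming ΠσΠ ≠ 0). In entropy form: H_max(σ) > H_{−∞}(ΠσΠ) − 2 log₂(1/ε). -/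
/-!
In the eigenbasis `u` of `σ` the projector `Π` commutes with `σ`, so `ΠσΠ = Σ_{i<j} r_i |u_i⟩⟨u_i|`
and `tr((1 - Π)σ) = Σ_{i≥j} r_i ≤ ε`. The nonzero eigenvalues of `ΠσΠ` are among the `r_i` with
`i < j`, hence `λ_min⁺(ΠσΠ) ≥ r_k` for the last index `k < j`. By minimality of `j`,
`ε < Σ_{i≥k} r_i ≤ √r_k · Σ_{i≥k} √r_i ≤ √r_k · tr √σ`, because `r_i ≤ r_k` for `i ≥ k`.
-/

open Matrix Finset
open scoped ComplexOrder Classical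

noncomputable section

/-- PSD square root (junk value 0 if not PSD). -/
def psdSqrt {n : Type*} [Fintype n] [DecidableEq n] (A : Matrix n n ℂ) : Matrix n n ℂ :=
  if h : A.PosSemidef then
    (h.1.eigenvectorUnitary : Matrix n n ℂ) * diagonal ((↑) ∘ (√·) ∘ h.1.eigenvalues) *
      (star h.1.eigenvectorUnitary : Matrix n n ℂ) else 0

/-- `tr √A` for a positive semidefinite `A`. -/
def trSqrt {n : Type*} [Fintype n] [DecidableEq n] (A : Matrix n n ℂ) : ℝ :=
  ((psdSqrt A).trace).re

/-- smallest nonzero eigenvalue of a Hermitian matrix (junk value 0 otherwise). -/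
def lamMinPos {n : Type*} [Fintype n] [DecidableEq n] (A : Matrix n n ℂ) : ℝ :=
  if h : A.IsHermitian then sInf {x : ℝ | (∃ i, h.eigenvalues i = x) ∧ x ≠ 0} else 0

section ProjSum

variable {n ι : Type*}

def projSum (u : ι → n → ℂ) (c : ι → ℝ) (s : Finset ι) : Matrix n n ℂ :=
  ∑ i ∈ s, (c i : ℂ) • vecMulVec (u i) (star (u i))

variable {u : ι → n → ℂ}

lemma isHermitian_projSum (c : ι → ℝ) (s : Finset ι) : (projSum u c s).IsHermitian := by
  simp [projSum, IsHermitian, conjTranspose_sum, conjTranspose_smul]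

variable [Fintype n]

lemma projSum_mul_projSum [DecidableEq ι]
    (hu : ∀ i i', star (u i) ⬝ᵥ u i' = if i = i' then 1 else 0) (c d : ι → ℝ) (s t : Finset ι) :
    projSum u c s * projSum u d t = projSum u (fun i => c i * d i) (s ∩ t) := by
  have hterm : ∀ i m, ((c i : ℂ) • vecMulVec (u i) (star (u i))) *
      ((d m : ℂ) • vecMulVec (u m) (star (u m))) =
      if i = m then ((c i * d i : ℝ) : ℂ) • vecMulVec (u i) (star (u i)) else 0 := by
    intro i m
    rw [smul_mul_smul_comm, vecMulVec_mul_vecMulVec, hu]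
    split_ifs with him
    · subst him; simp
    · simp
  simp only [projSum, sum_mul_sum, hterm, sum_ite_eq, ← sum_filter, filter_mem_eq_inter]

lemma trace_projSum (hu : ∀ i, star (u i) ⬝ᵥ u i = 1) (c : ι → ℝ) (s : Finset ι) :
    (projSum u c s).trace = ∑ i ∈ s, (c i : ℂ) := by
  simp [projSum, trace_sum, trace_vecMulVec, dotProduct_comm _ (star _), hu]

lemma posSemidef_projSum {c : ι → ℝ} {s : Finset ι} (hc : ∀ i ∈ s, 0 ≤ c i) :
    (projSum u c s).PosSemidef :=
  posSemidef_sum s fun i hi => by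
    simpa [Complex.coe_smul] using (posSemidef_vecMulVec_self_star (u i)).smul (hc i hi)

lemma projSum_mulVec (c : ι → ℝ) (s : Finset ι) (v : n → ℂ) :
    projSum u c s *ᵥ v = ∑ i ∈ s, ((c i : ℂ) * (star (u i) ⬝ᵥ v)) • u i := by
  simp only [projSum, sum_mulVec, smul_mulVec, vecMulVec_mulVec, op_smul_eq_smul,
    smul_smul]

lemma exists_eq_of_projSum_mulVec_eq_smul [DecidableEq ι]
    (hu : ∀ i i', star (u i) ⬝ᵥ u i' = if i = i' then 1 else 0) {c : ι → ℝ} {s : Finset ι}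
    {v : n → ℂ} {x : ℝ} (hv : projSum u c s *ᵥ v = x • v) (hv0 : v ≠ 0) (hx : x ≠ 0) :
    ∃ m ∈ s, c m = x := by
  by_contra! hcx
  have hcoef : ∀ m ∈ s, star (u m) ⬝ᵥ v = 0 := by
    intro m hm
    have hxm : (x : ℂ) * (star (u m) ⬝ᵥ v) = c m * (star (u m) ⬝ᵥ v) :=
      calc (x : ℂ) * (star (u m) ⬝ᵥ v) = star (u m) ⬝ᵥ (projSum u c s *ᵥ v) := by
            rw [hv, dotProduct_smul, Complex.real_smul]
        _ = c m * (star (u m) ⬝ᵥ v) := by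
            simp [projSum_mulVec, dotProduct_sum, dotProduct_smul, hu, hm]
    by_contra hm0
    exact hcx m hm (by exact_mod_cast (mul_right_cancel₀ hm0 hxm).symm)
  have : x • v = 0 := by
    rw [← hv, projSum_mulVec]
    exact sum_eq_zero fun m hm => by simp [hcoef m hm]
  exact (smul_eq_zero.mp this).elim hx hv0

lemma le_lamMinPos {A : Matrix n n ℂ} [DecidableEq n] (hA : A.IsHermitian) (hA0 : A ≠ 0) {b : ℝ}
    (hb : ∀ i, hA.eigenvalues i ≠ 0 → b ≤ hA.eigenvalues i) : b ≤ lamMinPos A := by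
  obtain ⟨i, hi⟩ : ∃ i, hA.eigenvalues i ≠ 0 := by
    by_contra! h
    exact hA0 (hA.eigenvalues_eq_zero_iff.mp (funext h))
  rw [lamMinPos, dif_pos hA]
  exact le_csInf ⟨_, ⟨i, rfl⟩, hi⟩ fun _ ⟨⟨i, hi'⟩, hi0⟩ => hi' ▸ hb i (hi' ▸ hi0)

lemma le_lamMinPos_projSum [DecidableEq n] [DecidableEq ι]
    (hu : ∀ i i', star (u i) ⬝ᵥ u i' = if i = i' then 1 else 0) {c : ι → ℝ} {s : Finset ι}
    (h0 : projSum u c s ≠ 0) {b : ℝ} (hb : ∀ i ∈ s, b ≤ c i) : b ≤ lamMinPos (projSum u c s) := by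
  have hA := isHermitian_projSum (u := u) c s
  refine le_lamMinPos hA h0 fun i hi => ?_
  have hv0 : ⇑(hA.eigenvectorBasis i) ≠ 0 := by
    simpa using hA.eigenvectorBasis.orthonormal.ne_zero i
  obtain ⟨m, hm, hcm⟩ :=
    exists_eq_of_projSum_mulVec_eq_smul hu (hA.mulVec_eigenvectorBasis i) hv0 hi
  exact hcm ▸ hb m hm

/- `psdSqrt A` is the continuous functional calculus square root of `A`, which is the unique
positive semidefinite square root. -/
open scoped MatrixOrder in
lemma psdSqrt_eq_of_mul_self [DecidableEq n] {A B : Matrix n n ℂ} (hA : A.PosSemidef)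
    (hB : B.PosSemidef) (h : B * B = A) : psdSqrt A = B := by
  rw [psdSqrt, dif_pos hA]
  have h1 := hA.1.cfc_eq Real.sqrt
  rw [Matrix.IsHermitian.cfc, Unitary.conjStarAlgAut_apply] at h1
  refine h1.symm.trans ?_
  rw [← cfcₙ_eq_cfc, ← CFC.sqrt_eq_real_sqrt A (Matrix.nonneg_iff_posSemidef.mpr hA)]
  exact CFC.sqrt_unique h (Matrix.nonneg_iff_posSemidef.mpr hB)

lemma trSqrt_projSum [DecidableEq n] [DecidableEq ι]
    (hu : ∀ i i', star (u i) ⬝ᵥ u i' = if i = i' then 1 else 0) {c : ι → ℝ} {s : Finset ι}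
    (hc : ∀ i ∈ s, 0 ≤ c i) : trSqrt (projSum u c s) = ∑ i ∈ s, √(c i) := by
  have hsq : projSum u (fun i => √(c i)) s * projSum u (fun i => √(c i)) s = projSum u c s := by
    rw [projSum_mul_projSum hu, inter_self]
    exact sum_congr rfl fun i hi => by simp only [Real.mul_self_sqrt (hc i hi)]
  rw [trSqrt, psdSqrt_eq_of_mul_self (posSemidef_projSum hc)
    (posSemidef_projSum fun _ _ => Real.sqrt_nonneg _) hsq,
    trace_projSum fun i => by simpa using hu i i]
  simp

end ProjSum

lemma sum_le_sqrt_mul_sum_sqrt {ι : Type*} {s : Finset ι} {r : ι → ℝ} {M : ℝ}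
    (hr : ∀ i ∈ s, 0 ≤ r i) (hM : ∀ i ∈ s, r i ≤ M) : ∑ i ∈ s, r i ≤ √M * ∑ i ∈ s, √(r i) := by
  rw [mul_sum]
  refine sum_le_sum fun i hi => ?_
  calc r i = √(r i) * √(r i) := (Real.mul_self_sqrt (hr i hi)).symm
    _ ≤ √M * √(r i) := by gcongr; exact hM i hi

lemma div_sqrt_lt_of_lt_sqrt_mul {ε a l T : ℝ} (hε : 0 ≤ ε) (ha : 0 < a) (hal : a ≤ l)
    (h : ε < √a * T) : ε / √l < T := by
  have hsa : 0 < √a := Real.sqrt_pos.mpr ha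
  calc ε / √l ≤ ε / √a := by gcongr
    _ < T := by rwa [div_lt_iff₀' hsa]

lemma logb_sub_lt_two_mul_logb {ε l T : ℝ} (hε : 0 < ε) (hl : 0 < l) (h : ε / √l < T) :
    2 * Real.logb 2 T > -Real.logb 2 l - 2 * Real.logb 2 (1 / ε) := by
  have hsl : 0 < √l := Real.sqrt_pos.mpr hl
  have hlog := Real.logb_lt_logb one_lt_two (div_pos hε hsl) h
  have hlogsqrt : Real.logb 2 √l = Real.logb 2 l / 2 := by
    rw [Real.logb, Real.logb, Real.log_sqrt hl.le, div_div, mul_comm, ← div_div]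
  rw [Real.logb_div hε.ne' hsl.ne', hlogsqrt] at hlog
  rw [one_div, Real.logb_inv]
  linarith

theorem Hmax_tail_bound_general {n : ℕ}
    (σ : Matrix (Fin n) (Fin n) ℂ)
    (r : Fin n → ℝ) (u : Fin n → Fin n → ℂ)
    (hu : ∀ i i', star (u i) ⬝ᵥ u i' = if i = i' then 1 else 0)
    (hdec : σ = ∑ i, ((r i : ℝ) : ℂ) • vecMulVec (u i) (star (u i)))
    (hmono : Antitone r) (hrnn : ∀ i, 0 ≤ r i)
    (ε : ℝ) (hε : 0 < ε) (j : Fin n)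
    (hj : ∑ i ∈ univ.filter (fun i => j ≤ i), r i ≤ ε)
    (hjmin : ∀ j' : Fin n, j' < j → ε < ∑ i ∈ univ.filter (fun i => j' ≤ i), r i)
    (P : Matrix (Fin n) (Fin n) ℂ)
    (hP : P = ∑ i ∈ univ.filter (fun i => i < j), vecMulVec (u i) (star (u i)))
    (hne : P * σ * P ≠ 0) :
    ((((1 : Matrix (Fin n) (Fin n) ℂ) - P) * σ).trace).re ≤ ε ∧
    ε / Real.sqrt (lamMinPos (P * σ * P)) < trSqrt σ ∧
    2 * Real.logb 2 (trSqrt σ) >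
      (- Real.logb 2 (lamMinPos (P * σ * P))) - 2 * Real.logb 2 (1 / ε) := by
  set F := univ.filter (fun i => i < j)
  have hnorm : ∀ i, star (u i) ⬝ᵥ u i = 1 := fun i => by simpa using hu i i
  have hσr : σ = projSum u r univ := hdec
  have hPF : P = projSum u (fun _ => 1) F := by simp [hP, projSum]
  have hPσ : P * σ = projSum u r F := by rw [hPF, hσr, projSum_mul_projSum hu]; simp
  have hPσP : P * σ * P = projSum u r F := by rw [hPσ, hPF, projSum_mul_projSum hu]; simp
  have htail : ((((1 : Matrix (Fin n) (Fin n) ℂ) - P) * σ).trace).re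
      = ∑ i ∈ univ.filter (fun i => j ≤ i), r i := by
    rw [sub_mul, one_mul, trace_sub, hPσ, hσr, trace_projSum hnorm, trace_projSum hnorm,
      ← sum_filter_add_sum_filter_not univ (fun i => i < j)]
    simp [F, not_lt]
  have hFne : F.Nonempty := by
    rw [nonempty_iff_ne_empty]
    rintro hF
    exact hne (by rw [hPσP, hF]; simp [projSum])
  set k := F.max' hFne
  have hkj : k < j := (mem_filter.mp (F.max'_mem hFne)).2
  have hlam : r k ≤ lamMinPos (P * σ * P) := by
    rw [hPσP] at hne ⊢
    exact le_lamMinPos_projSum hu hne fun i hi => hmono (F.le_max' i hi)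
  have htrS : trSqrt σ = ∑ i, √(r i) := by rw [hσr, trSqrt_projSum hu fun i _ => hrnn i]
  have hkey : ε < √(r k) * trSqrt σ :=
    calc ε < ∑ i ∈ univ.filter (fun i => k ≤ i), r i := hjmin k hkj
      _ ≤ √(r k) * ∑ i ∈ univ.filter (fun i => k ≤ i), √(r i) :=
        sum_le_sqrt_mul_sum_sqrt (fun i _ => hrnn i) fun i hi => hmono (mem_filter.mp hi).2
      _ ≤ √(r k) * trSqrt σ := by rw [htrS]; gcongr; exact subset_univ _
  have hrk : 0 < r k := Real.sqrt_pos.mp <| pos_of_mul_pos_left (hε.trans hkey) <| by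
    rw [htrS]; exact sum_nonneg fun i _ => Real.sqrt_nonneg _
  have hbound := div_sqrt_lt_of_lt_sqrt_mul hε.le hrk hlam hkey
  exact ⟨htail ▸ hj, hbound, logb_sub_lt_two_mul_logb hε (hrk.trans_le hlam) hbound⟩

/-- Eigenvalue-tail bound relating `H_max` and `H_{−∞}`: with `σ = Σ_i r_i |u_i⟩⟨u_i|`,
eigenvalues non-increasing, `j` the smallest index whose tail sum is `≤ ε`, and
`P = Σ_{i<j} |u_i⟩⟨u_i|`, one has `tr((1−P)σ) ≤ ε` and
`tr √σ > ε · λ_min⁺(PσP)^{−1/2}`; in entropy form,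
`H_max(σ) > H_{−∞}(PσP) − 2 log₂(1/ε)`. -/
theorem Hmax_tail_bound {n : ℕ}
    (σ : Matrix (Fin n) (Fin n) ℂ) (hσ : σ.PosSemidef) (htr : σ.trace.re ≤ 1)
    (r : Fin n → ℝ) (u : Fin n → Fin n → ℂ)
    (hu : ∀ i i', star (u i) ⬝ᵥ u i' = if i = i' then 1 else 0)
    (hdec : σ = ∑ i, ((r i : ℝ) : ℂ) • vecMulVec (u i) (star (u i)))
    (hmono : Antitone r) (hrnn : ∀ i, 0 ≤ r i)
    (ε : ℝ) (hε : 0 < ε) (j : Fin n)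
    (hj : ∑ i ∈ univ.filter (fun i => j ≤ i), r i ≤ ε)
    (hjmin : ∀ j' : Fin n, j' < j → ε < ∑ i ∈ univ.filter (fun i => j' ≤ i), r i)
    (P : Matrix (Fin n) (Fin n) ℂ)
    (hP : P = ∑ i ∈ univ.filter (fun i => i < j), vecMulVec (u i) (star (u i)))
    (hne : P * σ * P ≠ 0) :
    ((((1 : Matrix (Fin n) (Fin n) ℂ) - P) * σ).trace).re ≤ ε ∧
    ε / Real.sqrt (lamMinPos (P * σ * P)) < trSqrt σ ∧
    2 * Real.logb 2 (trSqrt σ) >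
      (- Real.logb 2 (lamMinPos (P * σ * P))) - 2 * Real.logb 2 (1 / ε) :=
  Hmax_tail_bound_general σ r u hu hdec hmono hrnn ε hε j hj hjmin P hP hne
end
end

section
/- Monotonicity of generalized fidelity under projection-type maps: for subnormalized states ρ, σ (positive semidefinite with trace ≤ 1) and a positive semidefinite operator Π ≤ 1, the generalized fidelity satisfies F̄(ΠρΠ, ΠσΠ) ≥ F̄(ρ, σ); equivalently the purified distance satisfies P(ΠρΠ, ΠσΠ) ≤ P(ρ, σ). -/
open Matrix
open scoped ComplexOrder Classical

noncomputable section

/-- trace norm `‖A‖₁ = tr √(A Aᴴ)`. -/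
def trNorm {n : Type*} [Fintype n] [DecidableEq n] (A : Matrix n n ℂ) : ℝ :=
  ((psdSqrt (A * A.conjTranspose)).trace).re

/-- generalized fidelity `F̄(ρ,σ) = ‖√ρ√σ‖₁ + √((1 − tr ρ)(1 − tr σ))`
on subnormalized states. -/
def genFid {n : Type*} [Fintype n] [DecidableEq n] (A B : Matrix n n ℂ) : ℝ :=
  trNorm (psdSqrt A * psdSqrt B) +
    Real.sqrt ((1 - A.trace.re) * (1 - B.trace.re))

/-- purified distance `P(ρ,σ) = √(1 − F̄(ρ,σ)²)`. -/
def purDist {n : Type*} [Fintype n] [DecidableEq n] (A B : Matrix n n ℂ) : ℝ :=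
  Real.sqrt (1 - (genFid A B) ^ 2)

/-! With `L = √(1 - P²)` one has `P² + L² = 1`, hence `√ρ√σ = (P√ρ)ᴴ(P√σ) + (L√ρ)ᴴ(L√σ)`.
By polar decomposition `‖Aᴴ B‖₁ = ‖√(AAᴴ)√(BBᴴ)‖₁`, so the triangle inequality for the trace norm
gives `‖√ρ√σ‖₁ ≤ ‖√(PρP)√(PσP)‖₁ + ‖√(LρL)√(LσL)‖₁`, and Cauchy–Schwarz bounds the last term by
`√(tr LρL · tr LσL)`. As `tr LρL = tr ρ - tr PρP`, what remains is
`√(rs) + √(tu) ≤ √((r+t)(s+u))` with `r = 1 - tr ρ`, `t = tr LρL`, etc. -/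

lemma Real.sqrt_mul_add_sqrt_mul_le {r s t u : ℝ} (hr : 0 ≤ r) (hs : 0 ≤ s) (ht : 0 ≤ t)
    (hu : 0 ≤ u) : √(r * s) + √(t * u) ≤ √((r + t) * (s + u)) := by
  rw [Real.sqrt_mul hr, Real.sqrt_mul ht]
  apply Real.le_sqrt_of_sq_le
  nlinarith [sq_nonneg (√r * √u - √t * √s), Real.sq_sqrt hr, Real.sq_sqrt hs, Real.sq_sqrt ht,
    Real.sq_sqrt hu]

namespace Matrix

variable {n : Type*} [Fintype n]

lemma PosSemidef.re_trace_nonneg {A : Matrix n n ℂ} (hA : A.PosSemidef) : 0 ≤ A.trace.re :=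
  (Complex.le_def.mp hA.trace_nonneg).1

variable [DecidableEq n]

section PsdSqrt

open scoped MatrixOrder

lemma psdSqrt_eq_cfcSqrt {A : Matrix n n ℂ} (hA : A.PosSemidef) : psdSqrt A = CFC.sqrt A := by
  rw [CFC.sqrt_eq_cfc, cfc_nnreal_eq_real _ A hA.nonneg, hA.1.cfc_eq, IsHermitian.cfc,
    Unitary.conjStarAlgAut_apply, psdSqrt, dif_pos hA]
  congr 3
  ext1 i
  simp [max_eq_left (hA.eigenvalues_nonneg i)]

lemma posSemidef_psdSqrt (A : Matrix n n ℂ) : (psdSqrt A).PosSemidef := by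
  by_cases hA : A.PosSemidef
  · rw [psdSqrt_eq_cfcSqrt hA]
    exact (CFC.sqrt_nonneg A).posSemidef
  · rw [psdSqrt, dif_neg hA]
    exact .zero

lemma conjTranspose_psdSqrt (A : Matrix n n ℂ) : (psdSqrt A)ᴴ = psdSqrt A :=
  (posSemidef_psdSqrt A).1

lemma psdSqrt_mul_psdSqrt {A : Matrix n n ℂ} (hA : A.PosSemidef) :
    psdSqrt A * psdSqrt A = A := by
  rw [psdSqrt_eq_cfcSqrt hA]
  exact CFC.sqrt_mul_sqrt_self A hA.nonneg

end PsdSqrt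

lemma re_trace_mul_conjTranspose_le (X Y : Matrix n n ℂ) :
    (Y * Xᴴ).trace.re ≤ √(X * Xᴴ).trace.re * √(Y * Yᴴ).trace.re := by
  let _ := toMatrixSeminormedAddCommGroup (1 : Matrix n n ℂ) .one
  let _ := toMatrixInnerProductSpace (1 : Matrix n n ℂ) .one
  have h := re_inner_le_norm (𝕜 := ℂ) X Y
  rw [@norm_eq_sqrt_re_inner ℂ, @norm_eq_sqrt_re_inner ℂ] at h
  change (Y * 1 * Xᴴ).trace.re ≤ √(X * 1 * Xᴴ).trace.re * √(Y * 1 * Yᴴ).trace.re at h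
  simpa only [Matrix.mul_one] using h

lemma of_orthonormalBasis_mem_unitaryGroup (b : OrthonormalBasis n ℂ (EuclideanSpace ℂ n)) :
    of (fun i j => b i j) ∈ unitaryGroup n ℂ := by
  rw [mem_unitaryGroup_iff]
  ext i j
  have := orthonormal_iff_ite.mp b.orthonormal j i
  rw [EuclideanSpace.inner_eq_star_dotProduct] at this
  simpa [one_apply, eq_comm, mul_apply, dotProduct] using this

lemma exists_mem_unitaryGroup_of_mul_conjTranspose_eq_diagonal {X : Matrix n n ℂ} {d : n → ℝ}
    (hX : X * Xᴴ = diagonal fun i => (d i : ℂ)) :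
    ∃ W ∈ unitaryGroup n ℂ, X = (diagonal fun i => (√(d i) : ℂ)) * W := by
  -- The rows of `X` are orthogonal with `‖X i‖² = d i`: normalise the nonzero ones and extend
  -- them to an orthonormal basis, whose rows form `W`.
  let x (i : n) : EuclideanSpace ℂ n := WithLp.toLp 2 (X i)
  have hinner (i j : n) : inner ℂ (x i) (x j) = if i = j then (d i : ℂ) else 0 := by
    rw [EuclideanSpace.inner_toLp_toLp]
    change (X * Xᴴ) j i = _
    rw [hX, diagonal_apply]
    by_cases h : i = j
    · subst h; simp
    · simp [h, Ne.symm h]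
  have hnorm (i : n) : ‖x i‖ = √(d i) := by
    rw [@norm_eq_sqrt_re_inner ℂ, hinner, if_pos rfl, RCLike.re_to_complex, Complex.ofReal_re]
  let S : Set n := {i | x i ≠ 0}
  have hv : Orthonormal ℂ (S.domRestrict fun i => (‖x i‖⁻¹ : ℂ) • x i) := by
    rw [orthonormal_iff_ite]
    rintro ⟨i, hi⟩ ⟨j, hj⟩
    by_cases h : i = j
    · subst h
      rw [if_pos rfl]
      simp only [Set.domRestrict_apply]
      have : ‖x i‖ ≠ 0 := norm_ne_zero_iff.mpr hi
      simp [inner_self_eq_norm_sq_to_K, norm_smul, this]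
    · rw [if_neg (by simpa using h)]
      simp [inner_smul_left, inner_smul_right, hinner, h]
  obtain ⟨b, hb⟩ := hv.exists_orthonormalBasis_extension_of_card_eq finrank_euclideanSpace
  refine ⟨of fun i j => b i j, of_orthonormalBasis_mem_unitaryGroup b, ?_⟩
  ext i j
  rw [diagonal_mul]
  by_cases hi : x i = 0
  · have hXi : X i = 0 := congrArg WithLp.ofLp hi
    rw [← hnorm, hi, hXi]
    simp
  · rw [← hnorm, of_apply, hb i hi]
    have : (‖x i‖ : ℂ) ≠ 0 := by simpa using hi
    simp [this, x]

lemma exists_eq_psdSqrt_mul_unitary (M : Matrix n n ℂ) :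
    ∃ U ∈ unitaryGroup n ℂ, M = psdSqrt (M * Mᴴ) * U := by
  have hH : (M * Mᴴ).PosSemidef := posSemidef_self_mul_conjTranspose M
  let V : Matrix n n ℂ := hH.1.eigenvectorUnitary
  have hV : V ∈ unitaryGroup n ℂ := hH.1.eigenvectorUnitary.2
  have hdiag : (star V * M) * (star V * M)ᴴ = diagonal fun i => (hH.1.eigenvalues i : ℂ) := by
    have := hH.1.conjStarAlgAut_star_eigenvectorUnitary
    rw [Unitary.conjStarAlgAut_apply, Unitary.coe_star, star_star] at this
    convert this using 1
    · simp only [V, conjTranspose_mul, star_eq_conjTranspose, conjTranspose_conjTranspose,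
        mul_assoc]
    · rfl
  obtain ⟨W, hW, hVM⟩ := exists_mem_unitaryGroup_of_mul_conjTranspose_eq_diagonal hdiag
  refine ⟨V * W, mul_mem hV hW, ?_⟩
  rw [psdSqrt, dif_pos hH]
  calc M = V * (star V * M) := by rw [← mul_assoc, Unitary.mul_star_self_of_mem hV, one_mul]
    _ = V * (diagonal fun i => (√(hH.1.eigenvalues i) : ℂ)) * star V * (V * W) := by
      rw [hVM, mul_assoc _ (star V), ← mul_assoc (star V), Unitary.star_mul_self_of_mem hV,
        one_mul, mul_assoc]

lemma re_trace_mul_le_trNorm (M : Matrix n n ℂ) {W : Matrix n n ℂ}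
    (hW : W ∈ unitaryGroup n ℂ) : (M * W).trace.re ≤ trNorm M := by
  obtain ⟨U, hU, hM⟩ := exists_eq_psdSqrt_mul_unitary M
  set S := psdSqrt (M * Mᴴ)
  set R := psdSqrt S
  have hRR : R * R = S := psdSqrt_mul_psdSqrt (posSemidef_psdSqrt _)
  have hY : R * (U * W) * (R * (U * W))ᴴ = R * Rᴴ := by
    rw [conjTranspose_mul, ← star_eq_conjTranspose (U * W), mul_assoc, ← mul_assoc (U * W),
      Unitary.mul_star_self_of_mem (mul_mem hU hW), one_mul]
  have hR : Rᴴ = R := conjTranspose_psdSqrt S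
  -- Cauchy–Schwarz for `⟪R, R U W⟫`, both of Hilbert–Schmidt norm `√(tr (R * R)) = √‖M‖₁`.
  calc (M * W).trace.re = (R * (U * W) * Rᴴ).trace.re := by
        rw [hM, ← hRR, hR, mul_assoc, mul_assoc, trace_mul_comm]
    _ ≤ √(R * Rᴴ).trace.re * √(R * (U * W) * (R * (U * W))ᴴ).trace.re :=
        re_trace_mul_conjTranspose_le R _
    _ = trNorm M := by
        rw [hY, Real.mul_self_sqrt (posSemidef_self_mul_conjTranspose R).re_trace_nonneg, hR, hRR]
        rfl

lemma exists_re_trace_mul_eq_trNorm (M : Matrix n n ℂ) :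
    ∃ W ∈ unitaryGroup n ℂ, (M * W).trace.re = trNorm M := by
  obtain ⟨U, hU, hM⟩ := exists_eq_psdSqrt_mul_unitary M
  refine ⟨star U, Unitary.star_mem hU, ?_⟩
  conv_lhs => rw [hM, mul_assoc, Unitary.mul_star_self_of_mem hU, mul_one]
  rfl

lemma trNorm_add_le (X Y : Matrix n n ℂ) : trNorm (X + Y) ≤ trNorm X + trNorm Y := by
  obtain ⟨W, hW, hXY⟩ := exists_re_trace_mul_eq_trNorm (X + Y)
  rw [← hXY, add_mul, trace_add, Complex.add_re]
  exact add_le_add (re_trace_mul_le_trNorm X hW) (re_trace_mul_le_trNorm Y hW)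

lemma trNorm_unitary_mul_mul_le (M : Matrix n n ℂ) {U V : Matrix n n ℂ}
    (hU : U ∈ unitaryGroup n ℂ) (hV : V ∈ unitaryGroup n ℂ) : trNorm (U * M * V) ≤ trNorm M := by
  obtain ⟨W, hW, hMW⟩ := exists_re_trace_mul_eq_trNorm (U * M * V)
  have hcycle : (U * M * V * W).trace = (M * (V * W * U)).trace := by
    rw [mul_assoc, mul_assoc, trace_mul_comm]
    simp only [mul_assoc]
  rw [← hMW, hcycle]
  exact re_trace_mul_le_trNorm M (mul_mem (mul_mem hV hW) hU)

lemma trNorm_unitary_mul_mul (M : Matrix n n ℂ) {U V : Matrix n n ℂ}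
    (hU : U ∈ unitaryGroup n ℂ) (hV : V ∈ unitaryGroup n ℂ) : trNorm (U * M * V) = trNorm M := by
  refine le_antisymm (trNorm_unitary_mul_mul_le M hU hV) ?_
  calc trNorm M = trNorm (star U * (U * M * V) * star V) := by
        rw [← mul_assoc, ← mul_assoc, Unitary.star_mul_self_of_mem hU, one_mul, mul_assoc,
          Unitary.mul_star_self_of_mem hV, mul_one]
    _ ≤ trNorm (U * M * V) :=
        trNorm_unitary_mul_mul_le _ (Unitary.star_mem hU) (Unitary.star_mem hV)

lemma trNorm_conjTranspose_mul (A B : Matrix n n ℂ) :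
    trNorm (Aᴴ * B) = trNorm (psdSqrt (A * Aᴴ) * psdSqrt (B * Bᴴ)) := by
  obtain ⟨U, hU, hA⟩ := exists_eq_psdSqrt_mul_unitary A
  obtain ⟨V, hV, hB⟩ := exists_eq_psdSqrt_mul_unitary B
  have h : Aᴴ * B = star U * (psdSqrt (A * Aᴴ) * psdSqrt (B * Bᴴ)) * V := by
    conv_lhs => rw [hA, hB]
    rw [conjTranspose_mul, conjTranspose_psdSqrt, ← star_eq_conjTranspose]
    simp only [mul_assoc]
  rw [h, trNorm_unitary_mul_mul _ (Unitary.star_mem hU) hV]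

lemma trNorm_conjTranspose_mul_le (C D : Matrix n n ℂ) :
    trNorm (Cᴴ * D) ≤ √(C * Cᴴ).trace.re * √(D * Dᴴ).trace.re := by
  obtain ⟨W, hW, hCD⟩ := exists_re_trace_mul_eq_trNorm (Cᴴ * D)
  have hDW : D * W * (D * W)ᴴ = D * Dᴴ := by
    rw [conjTranspose_mul, ← star_eq_conjTranspose W, mul_assoc, ← mul_assoc W,
      Unitary.mul_star_self_of_mem hW, one_mul]
  calc trNorm (Cᴴ * D) = (D * W * Cᴴ).trace.re := by rw [← hCD, mul_assoc, trace_mul_comm]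
    _ ≤ √(C * Cᴴ).trace.re * √(D * W * (D * W)ᴴ).trace.re := re_trace_mul_conjTranspose_le C _
    _ = √(C * Cᴴ).trace.re * √(D * Dᴴ).trace.re := by rw [hDW]

lemma trNorm_psdSqrt_mul_psdSqrt_le {A B : Matrix n n ℂ} (hA : A.PosSemidef)
    (hB : B.PosSemidef) : trNorm (psdSqrt A * psdSqrt B) ≤ √A.trace.re * √B.trace.re := by
  have h := trNorm_conjTranspose_mul_le (psdSqrt A) (psdSqrt B)
  rwa [conjTranspose_psdSqrt, conjTranspose_psdSqrt, psdSqrt_mul_psdSqrt hA,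
    psdSqrt_mul_psdSqrt hB] at h

lemma trNorm_psdSqrt_mul_psdSqrt_le_add {ρ σ K L : Matrix n n ℂ} (hρ : ρ.PosSemidef)
    (hσ : σ.PosSemidef) (hKL : Kᴴ * K + Lᴴ * L = 1) :
    trNorm (psdSqrt ρ * psdSqrt σ) ≤
      trNorm (psdSqrt (K * ρ * Kᴴ) * psdSqrt (K * σ * Kᴴ)) +
        trNorm (psdSqrt (L * ρ * Lᴴ) * psdSqrt (L * σ * Lᴴ)) := by
  have hsplit : psdSqrt ρ * psdSqrt σ =
      (K * psdSqrt ρ)ᴴ * (K * psdSqrt σ) + (L * psdSqrt ρ)ᴴ * (L * psdSqrt σ) := by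
    simp only [conjTranspose_mul, conjTranspose_psdSqrt, mul_assoc, ← mul_add]
    rw [← mul_assoc Kᴴ, ← mul_assoc Lᴴ, ← add_mul, hKL, one_mul]
  have hconj {τ : Matrix n n ℂ} (hτ : τ.PosSemidef) (K : Matrix n n ℂ) :
      K * psdSqrt τ * (K * psdSqrt τ)ᴴ = K * τ * Kᴴ := by
    rw [conjTranspose_mul, conjTranspose_psdSqrt, mul_assoc, ← mul_assoc (psdSqrt τ),
      psdSqrt_mul_psdSqrt hτ, mul_assoc]
  rw [hsplit, ← hconj hρ K, ← hconj hσ K, ← hconj hρ L, ← hconj hσ L,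
    ← trNorm_conjTranspose_mul, ← trNorm_conjTranspose_mul]
  exact trNorm_add_le _ _

lemma PosSemidef.one_sub_mul_self {P : Matrix n n ℂ} (hP : P.PosSemidef)
    (hP1 : (1 - P).PosSemidef) : (1 - P * P).PosSemidef := by
  set R := psdSqrt P
  have hRR : R * R = P := psdSqrt_mul_psdSqrt hP
  have h : 1 - P * P = (1 - P) + R * (1 - P) * Rᴴ := by
    rw [show Rᴴ = R from conjTranspose_psdSqrt P, ← hRR]
    noncomm_ring
  rw [h]
  exact hP1.add (hP1.mul_mul_conjTranspose_same R)

lemma trace_conj_add_trace_conj {K L : Matrix n n ℂ} (hKL : Kᴴ * K + Lᴴ * L = 1)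
    (ρ : Matrix n n ℂ) : (K * ρ * Kᴴ).trace + (L * ρ * Lᴴ).trace = ρ.trace := by
  rw [trace_mul_cycle, trace_mul_cycle L, ← trace_add, ← add_mul, hKL, one_mul]

end Matrix

section Fidelity

variable {n : Type*} [Fintype n] [DecidableEq n]

open Matrix

lemma genFid_nonneg (A B : Matrix n n ℂ) : 0 ≤ genFid A B :=
  add_nonneg (posSemidef_psdSqrt _).re_trace_nonneg (Real.sqrt_nonneg _)

lemma purDist_le_purDist_of_genFid_le {A B C D : Matrix n n ℂ} (h : genFid A B ≤ genFid C D) :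
    purDist C D ≤ purDist A B :=
  Real.sqrt_le_sqrt (by gcongr; exact genFid_nonneg A B)

lemma genFid_le_genFid_conj {ρ σ K : Matrix n n ℂ} (hρ : ρ.PosSemidef) (hρtr : ρ.trace.re ≤ 1)
    (hσ : σ.PosSemidef) (hσtr : σ.trace.re ≤ 1) (hK : (1 - Kᴴ * K).PosSemidef) :
    genFid ρ σ ≤ genFid (K * ρ * Kᴴ) (K * σ * Kᴴ) := by
  set L := psdSqrt (1 - Kᴴ * K)
  have hKL : Kᴴ * K + Lᴴ * L = 1 := by
    rw [conjTranspose_psdSqrt, psdSqrt_mul_psdSqrt hK, add_sub_cancel]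
  have hLρ := hρ.mul_mul_conjTranspose_same L
  have hLσ := hσ.mul_mul_conjTranspose_same L
  have htrρ : 1 - (K * ρ * Kᴴ).trace.re = (1 - ρ.trace.re) + (L * ρ * Lᴴ).trace.re := by
    rw [← trace_conj_add_trace_conj hKL ρ, Complex.add_re]; ring
  have htrσ : 1 - (K * σ * Kᴴ).trace.re = (1 - σ.trace.re) + (L * σ * Lᴴ).trace.re := by
    rw [← trace_conj_add_trace_conj hKL σ, Complex.add_re]; ring
  have hsplit := trNorm_psdSqrt_mul_psdSqrt_le_add hρ hσ hKL
  have hL := trNorm_psdSqrt_mul_psdSqrt_le hLρ hLσ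
  have hnum := Real.sqrt_mul_add_sqrt_mul_le (sub_nonneg.2 hρtr) (sub_nonneg.2 hσtr)
    hLρ.re_trace_nonneg hLσ.re_trace_nonneg
  rw [Real.sqrt_mul hLρ.re_trace_nonneg] at hnum
  rw [genFid, genFid, htrρ, htrσ]
  linarith

end Fidelity

/-- Monotonicity of the generalized fidelity under projection-type maps: for
subnormalized `ρ, σ` and `0 ≤ P ≤ 1`, `F̄(PρP, PσP) ≥ F̄(ρ, σ)`, equivalently
`P(PρP, PσP) ≤ P(ρ, σ)`. -/
theorem genFid_conj_mono {n : Type*} [Fintype n] [DecidableEq n]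
    (ρ σ P : Matrix n n ℂ)
    (hρ : ρ.PosSemidef) (hρtr : ρ.trace.re ≤ 1)
    (hσ : σ.PosSemidef) (hσtr : σ.trace.re ≤ 1)
    (hP : P.PosSemidef) (hP1 : ((1 : Matrix n n ℂ) - P).PosSemidef) :
    genFid ρ σ ≤ genFid (P * ρ * P) (P * σ * P) ∧
    purDist (P * ρ * P) (P * σ * P) ≤ purDist ρ σ := by
  have hfid := genFid_le_genFid_conj hρ hρtr hσ hσtr (K := P)
    (by rw [hP.1]; exact hP.one_sub_mul_self hP1)
  rw [hP.1] at hfid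
  exact ⟨hfid, purDist_le_purDist_of_genFid_le hfid⟩
end
end
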